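/- arXiv:1912.10914 — 7 statements merged into one kernel-verified Lean document; each statement's English description precedes it below -/
import Mathlib

section
/- For every y ∈ E, the set {x ∈ E : y ≼ x} is closed in E. -/
/-- `y ≼ x`: every open neighborhood of `x` contains a homeomorphic (open embedded)
copy of some open neighborhood of `y`. -/
def Preceq {E : Type*} [TopologicalSpace E] (y x : E) : Prop :=
  ∀ U : Set E, IsOpen U → x ∈ U →
    ∃ V : Set E, IsOpen V ∧ y ∈ V ∧ ∃ f : V → E, Topology.IsOpenEmbedding f ∧ Set.range f ⊆ U

theorem isClosed_setOf_preceq {E : Type*} [TopologicalSpace E] (y : E) :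
    IsClosed {x : E | Preceq y x} := by
  rw [← isOpen_compl_iff]
  rw [isOpen_iff_forall_mem_open]
  intro x hx
  simp only [Set.mem_compl_iff, Set.mem_setOf_eq, Preceq, not_forall] at hx
  obtain ⟨U, hU, hxU, hno⟩ := hx
  refine ⟨U, ?_, hU, hxU⟩
  intro x' hx'
  simp only [Set.mem_compl_iff, Set.mem_setOf_eq]
  intro h
  exact hno (h U hU hx')
end

section
/- Let E be a compact Hausdorff space and let x be a maximal element for the preorder ≼. If the equivalence class E(x) = {y : y ∼ x} is infinite, then every point of E(x) is an accumulation point of E(x). -/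
/-- `x ∼ y` iff `x ≼ y` and `y ≼ x`. -/
def EquivType {E : Type*} [TopologicalSpace E] (x y : E) : Prop :=
  Preceq x y ∧ Preceq y x

open Topology Set

section Aux

variable {E : Type*} [TopologicalSpace E]

lemma isOpenEmbedding_inclusion' {s t : Set E} (h : s ⊆ t) (hs : IsOpen s) :
    IsOpenEmbedding (Set.inclusion h) :=
  ⟨.inclusion h, by rw [Set.range_inclusion]; exact hs.preimage continuous_subtype_val⟩

lemma preceq_homeo {A B : Set E} (hA : IsOpen A) (hB : IsOpen B) (h : ↥A ≃ₜ ↥B) (a : A) :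
    Preceq (a : E) (h a : E) := by
  intro U hU hmem
  set W : Set E := Subtype.val '' (⇑h ⁻¹' (Subtype.val ⁻¹' U)) with hWdef
  have hWA : W ⊆ A := by rintro w ⟨a', _, rfl⟩; exact a'.2
  have hWopen : IsOpen W :=
    hA.isOpenMap_subtype_val _ ((hU.preimage continuous_subtype_val).preimage h.continuous)
  refine ⟨W, hWopen, ⟨a, hmem, rfl⟩, fun w => (h (Set.inclusion hWA w) : E), ?_, ?_⟩
  · exact hB.isOpenEmbedding_subtypeVal.comp
      (h.isOpenEmbedding.comp (isOpenEmbedding_inclusion' hWA hWopen))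
  · rintro _ ⟨w, rfl⟩
    obtain ⟨a', ha', hval⟩ := w.2
    have heq : Set.inclusion hWA w = a' := Subtype.ext hval.symm
    show (h (Set.inclusion hWA w) : E) ∈ U
    rw [heq]
    exact ha'

lemma equivType_homeo {A B : Set E} (hA : IsOpen A) (hB : IsOpen B) (h : ↥A ≃ₜ ↥B) (a : A) :
    EquivType (a : E) (h a : E) := by
  refine ⟨preceq_homeo hA hB h a, ?_⟩
  have := preceq_homeo hB hA h.symm (h a)
  simpa using this

lemma equivType_of_isOpenEmbedding {V : Set E} (hV : IsOpen V) {f : V → E}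
    (hf : IsOpenEmbedding f) (v : V) : EquivType (v : E) (f v) := by
  have hR : IsOpen (Set.range f) := hf.isOpen_range
  have := equivType_homeo hV hR (hf.isEmbedding.toHomeomorph) v
  simpa using this

lemma preceq_trans {a b c : E} (hab : Preceq a b) (hbc : Preceq b c) : Preceq a c := by
  intro U hU hc
  obtain ⟨V, hVopen, hbV, f, hf, hfU⟩ := hbc U hU hc
  obtain ⟨W, hWopen, haW, g, hg, hgV⟩ := hab V hVopen hbV
  -- corestrict g to V then compose with f
  let g' : W → ↥V := fun w => ⟨g w, hgV ⟨w, rfl⟩⟩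
  have hg' : IsOpenEmbedding g' := by
    refine IsOpenEmbedding.of_continuous_injective_isOpenMap ?_ ?_ ?_
    · exact (hg.continuous).subtype_mk _
    · intro u v huv
      exact hg.injective (congrArg Subtype.val huv)
    · intro O hO
      have h1 : IsOpen (g '' O) := hg.isOpenMap O hO
      have h2 : g' '' O = Subtype.val ⁻¹' (g '' O) := by
        ext z
        simp only [Set.mem_image, Set.mem_preimage]
        constructor
        · rintro ⟨w, hw, rfl⟩; exact ⟨w, hw, rfl⟩
        · rintro ⟨w, hw, hwz⟩
          exact ⟨w, hw, Subtype.ext hwz⟩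
      rw [h2]
      exact h1.preimage continuous_subtype_val
  refine ⟨W, hWopen, haW, f ∘ g', hf.comp hg', ?_⟩
  rintro _ ⟨w, rfl⟩
  exact hfU ⟨g' w, rfl⟩

lemma equivType_symm {a b : E} (h : EquivType a b) : EquivType b a := ⟨h.2, h.1⟩

lemma equivType_trans {a b c : E} (hab : EquivType a b) (hbc : EquivType b c) :
    EquivType a c := ⟨preceq_trans hab.1 hbc.1, preceq_trans hbc.2 hab.2⟩

end Aux

theorem accPt_of_maximal_infinite_class {E : Type*} [TopologicalSpace E]
    [CompactSpace E] [T2Space E] (x : E)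
    (hmax : ∀ z : E, Preceq x z → Preceq z x)
    (hinf : {y : E | EquivType x y}.Infinite) :
    ∀ y ∈ {y : E | EquivType x y}, AccPt y (Filter.principal {y : E | EquivType x y}) := by
  set S : Set E := {y : E | EquivType x y} with hS
  -- Step 1: obtain an accumulation point p of S
  obtain ⟨p, hp⟩ := hinf.exists_accPt_principal
  rw [accPt_iff_nhds] at hp
  -- Step 2: p ∈ S
  have hxp : Preceq x p := by
    intro U hU hpU
    obtain ⟨s, ⟨hsU, hsS⟩, _⟩ := hp U (hU.mem_nhds hpU)
    exact hsS.1 U hU hsU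
  have hpS : EquivType x p := ⟨hxp, hmax p hxp⟩
  -- Step 3: every y ∈ S is an accumulation point of S
  intro y hy
  rw [accPt_iff_nhds]
  intro U hU
  obtain ⟨U', hU'U, hU'open, hyU'⟩ := mem_nhds_iff.mp hU
  -- p ≼ y
  have hy' : EquivType x y := hy
  have hpy : Preceq p y := preceq_trans hpS.2 hy'.1
  obtain ⟨V, hVopen, hpV, f, hf, hfU⟩ := hpy U' hU'open hyU'
  -- two distinct points of S in V
  obtain ⟨s, ⟨hsV, hsS⟩, hsp⟩ := hp V (hVopen.mem_nhds hpV)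
  -- f p and f s are two distinct points of S ∩ U'
  have hmem : ∀ v : V, (v : E) ∈ S → f v ∈ U' ∩ S := by
    intro v hv
    refine ⟨hfU ⟨v, rfl⟩, ?_⟩
    exact equivType_trans (show EquivType x (v:E) from hv) (equivType_of_isOpenEmbedding hVopen hf v)
  have h1 := hmem ⟨p, hpV⟩ hpS
  have h2 := hmem ⟨s, hsV⟩ hsS
  have hne : f ⟨p, hpV⟩ ≠ f ⟨s, hsV⟩ := by
    intro h
    exact hsp (congrArg Subtype.val (hf.injective h)).symm
  by_cases hcase : f ⟨p, hpV⟩ = y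
  · exact ⟨f ⟨s, hsV⟩, ⟨hU'U h2.1, h2.2⟩, by rw [← hcase]; exact fun h => hne h.symm⟩
  · exact ⟨f ⟨p, hpV⟩, ⟨hU'U h1.1, h1.2⟩, hcase⟩
end

section
/- Let G be a topological group and ℓ : G → [0,∞) a continuous length function. If A ⊆ G has the property that for every identity neighborhood V there exist a finite set F ⊆ G and k ≥ 1 with A ⊆ (F·V)^k, then ℓ is bounded on A. -/
open Pointwise

theorem length_bounded_on_coarsely_bounded {G : Type*} [Group G] [TopologicalSpace G]
    (ℓ : G → ℝ) (hcont : Continuous ℓ) (hnonneg : ∀ g, 0 ≤ ℓ g)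
    (hsymm : ∀ g : G, ℓ g⁻¹ = ℓ g) (hid : ℓ 1 = 0)
    (hsub : ∀ g h : G, ℓ (g * h) ≤ ℓ g + ℓ h)
    (A : Set G)
    (hA : ∀ V : Set G, IsOpen V → (1 : G) ∈ V →
      ∃ (F : Set G) (k : ℕ), F.Finite ∧ 1 ≤ k ∧ A ⊆ (F * V) ^ k) :
    ∃ C : ℝ, ∀ a ∈ A, ℓ a ≤ C := by
  set V : Set G := {g | ℓ g < 1} with hV
  have hVopen : IsOpen V := isOpen_lt hcont continuous_const
  have hV1 : (1 : G) ∈ V := by simp [hV, hid]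
  obtain ⟨F, k, hF, hk, hsubset⟩ := hA V hVopen hV1
  obtain ⟨M, hM⟩ := (hF.image ℓ).bddAbove
  rcases F.eq_empty_or_nonempty with h | ⟨f, hf⟩
  · refine ⟨0, fun a ha => absurd (hsubset ha) ?_⟩
    rw [h, Set.empty_mul, Set.empty_pow (Nat.one_le_iff_ne_zero.mp hk)]
    exact Set.notMem_empty a
  have key : ∀ s ∈ F * V, ℓ s ≤ M + 1 := by
    rintro _ ⟨f, hf, v, hv, rfl⟩
    have h1 : ℓ f ≤ M := hM (Set.mem_image_of_mem ℓ hf)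
    have h2 : ℓ v < 1 := hv
    calc ℓ (f * v) ≤ ℓ f + ℓ v := hsub f v
    _ ≤ M + 1 := by linarith
  have pow : ∀ n : ℕ, ∀ x ∈ (F * V) ^ n, ℓ x ≤ n * (M + 1) := by
    intro n
    induction n with
    | zero => intro x hx; simp at hx; simp [hx, hid]
    | succ n ih =>
      intro x hx
      rw [pow_succ] at hx
      rcases hx with ⟨y, hy, z, hz, rfl⟩
      calc ℓ (y * z) ≤ ℓ y + ℓ z := hsub y z
      _ ≤ n * (M + 1) + (M + 1) := add_le_add (ih y hy) (key z hz)
      _ = (n + 1 : ℕ) * (M + 1) := by push_cast; ring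
  exact ⟨k * (M + 1), fun a ha => pow k a (hsubset ha)⟩
end

section
/- Let G be a topological group, V ⊆ G an open identity neighborhood, and for each k ∈ ℕ a surjective continuous homomorphism ψ_k : G → ℤ^k (ℤ^k discrete) with V ⊆ ker ψ_k. Then G is not generated by any coarsely bounded subset: for every subset S ⊆ G that generates G as a group, S is not coarsely bounded. -/
open Pointwise

/-- A subset of a topological group is coarsely bounded if it is covered by `(F·W)^k`
for some finite `F` and `k ≥ 1`, for every identity neighborhood `W`. -/
def CoarselyBounded {G : Type*} [Group G] [TopologicalSpace G] (A : Set G) : Prop :=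
  ∀ W : Set G, IsOpen W → (1 : G) ∈ W →
    ∃ (F : Set G) (k : ℕ), F.Finite ∧ 1 ≤ k ∧ A ⊆ (F * W) ^ k

private lemma pow_subset_subgroup {G : Type*} [Group G] {A : Set G} {H : Subgroup G}
    (hA : A ⊆ H) : ∀ k : ℕ, A ^ (k + 1) ⊆ H := by
  intro k
  induction k with
  | zero => simpa using hA
  | succ m ih =>
    rw [pow_succ]
    rintro x ⟨a, ha, b, hb, rfl⟩
    exact H.mul_mem (ih ha) (hA hb)

theorem not_CB_generated_of_surj_to_free_abelian {G : Type*} [Group G] [TopologicalSpace G]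
    (V : Set G) (hVopen : IsOpen V) (hV1 : (1 : G) ∈ V)
    (ψ : ∀ k : ℕ, G →* Multiplicative (Fin k → ℤ))
    (hcont : ∀ k, Continuous (ψ k)) (hsurj : ∀ k, Function.Surjective (ψ k))
    (hker : ∀ k, ∀ g ∈ V, ψ k g = 1) :
    ∀ S : Set G, Subgroup.closure S = ⊤ → ¬ CoarselyBounded S := by
  intro S hS hCB
  obtain ⟨F, k, hF, hk, hsub⟩ := hCB V hVopen hV1
  set n := hF.toFinset.card + 1 with hn
  -- target additive set
  set T : Set (Fin n → ℤ) := (fun g => Multiplicative.toAdd (ψ n g)) '' F with hT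
  have hTfin : T.Finite := hF.image _
  -- every element of G maps into span ℤ T
  have key : ∀ g : G, Multiplicative.toAdd (ψ n g) ∈ Submodule.span ℤ T := by
    have hHsub : S ⊆ {g : G | Multiplicative.toAdd (ψ n g) ∈ Submodule.span ℤ T} := by
      intro s hs
      have hsk := hsub hs
      -- F * V lands in span
      have hFV : ∀ x ∈ F * V, Multiplicative.toAdd (ψ n x) ∈ Submodule.span ℤ T := by
        rintro x ⟨f, hf, v, hv, rfl⟩
        have : ψ n (f * v) = ψ n f := by
          rw [map_mul, hker n v hv, mul_one]
        rw [this]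
        exact Submodule.subset_span ⟨f, hf, rfl⟩
      -- define the subgroup of G given by preimage of span
      let H : Subgroup G :=
        { carrier := {g : G | Multiplicative.toAdd (ψ n g) ∈ Submodule.span ℤ T}
          one_mem' := by simp
          mul_mem' := by
            intro a b ha hb
            simp only [Set.mem_setOf_eq, map_mul, toAdd_mul] at *
            exact Submodule.add_mem _ ha hb
          inv_mem' := by
            intro a ha
            simp only [Set.mem_setOf_eq, map_inv, toAdd_inv] at *
            exact Submodule.neg_mem _ ha }
      have hsubH : F * V ⊆ (H : Set G) := hFV
      obtain ⟨m, rfl⟩ : ∃ m, k = m + 1 := ⟨k - 1, by omega⟩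
      exact pow_subset_subgroup hsubH m hsk
    intro g
    have hg : g ∈ Subgroup.closure S := by rw [hS]; trivial
    refine Subgroup.closure_induction (fun x hx => hHsub hx) (by simp) ?_ ?_ hg
    · intro a b _ _ ha hb
      simpa [map_mul] using Submodule.add_mem _ ha hb
    · intro a _ ha
      simpa [map_inv] using Submodule.neg_mem _ ha
  -- span T = ⊤
  have hspan : Submodule.span ℤ T = ⊤ := by
    rw [eq_top_iff]
    intro x _
    obtain ⟨g, hg⟩ := hsurj n (Multiplicative.ofAdd x)
    have := key g
    rw [hg] at this
    simpa using this
  -- finrank contradiction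
  have : Fintype T := hTfin.fintype
  have h1 : Module.finrank ℤ (Fin n → ℤ) ≤ T.toFinset.card := by
    calc Module.finrank ℤ (Fin n → ℤ)
        = Module.finrank ℤ (⊤ : Submodule ℤ (Fin n → ℤ)) := (finrank_top ℤ _).symm
      _ = Module.finrank ℤ (Submodule.span ℤ T) := by rw [hspan]
      _ ≤ T.toFinset.card := finrank_span_le_card T
  have h2 : Module.finrank ℤ (Fin n → ℤ) = n := Module.finrank_fin_fun ℤ
  have h3 : T.toFinset.card ≤ hF.toFinset.card := by
    have : T.toFinset ⊆ hF.toFinset.image (fun g => Multiplicative.toAdd (ψ n g)) := by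
      intro x hx
      simp only [Set.mem_toFinset] at hx
      obtain ⟨g, hg, rfl⟩ := hx
      exact Finset.mem_image.2 ⟨g, hF.mem_toFinset.2 hg, rfl⟩
    exact le_trans (Finset.card_le_card this) (Finset.card_image_le)
  omega
end

section
/- Let α be a countable ordinal and let E = ω^α·n + 1 with the order topology, n ≥ 1. For a point x ∈ E of Cantor–Bendixson rank β and a point y of rank γ, y ≼ x holds if and only if γ ≤ β. -/
/-- The derived set of `S`: points which are accumulation points of `S`. -/
def cbDerivedSet {E : Type*} [TopologicalSpace E] (S : Set E) : Set E :=
  {x | AccPt x (Filter.principal S)}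

/-- Transfinite iteration of the derived set operation (Cantor–Bendixson filtration). -/
noncomputable def cbIter (E : Type*) [TopologicalSpace E] (o : Ordinal.{0}) : Set E :=
  ⋂ b : {b : Ordinal.{0} // b < o}, cbDerivedSet (cbIter E b.1)
termination_by o
decreasing_by exact b.2

/-- `x` has Cantor–Bendixson rank `β`. -/
def HasCBRank {E : Type*} [TopologicalSpace E] (x : E) (β : Ordinal.{0}) : Prop :=
  x ∈ cbIter E β ∧ x ∉ cbIter E (β + 1)

open Ordinal Set Filter Topology

/-- ordinal dvd of difference -/
lemma ord_dvd_sub {d x y : Ordinal.{0}} (hx : d ∣ x) (hy : d ∣ y) : d ∣ x - y := by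
  rcases le_or_gt x y with h | h
  · rw [Ordinal.sub_eq_zero_iff_le.2 h]; exact dvd_zero d
  · obtain ⟨u, rfl⟩ := hx
    obtain ⟨v, rfl⟩ := hy
    rcases eq_or_ne d 0 with rfl | hd
    · simp
    have hvu : v ≤ u := le_of_not_gt fun hvu => absurd (mul_le_mul_right hvu.le d) (not_le.2 h)
    refine ⟨u - v, ?_⟩
    have : d * v + d * (u - v) = d * u := by
      rw [← mul_add, Ordinal.add_sub_cancel_of_le hvu]
    rw [← this, Ordinal.add_sub_cancel]

/-- small multiples are zero -/
lemma ord_dvd_lt_eq_zero {d r : Ordinal.{0}} (h : d ∣ r) (hr : r < d) : r = 0 := by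
  obtain ⟨s, rfl⟩ := h
  rcases eq_or_ne s 0 with rfl | hs
  · simp
  · have h1 : d * 1 ≤ d * s := mul_le_mul_right (Ordinal.one_le_iff_ne_zero.2 hs) d
    rw [mul_one] at h1
    exact absurd h1 (not_le.2 hr)

/-- collect divisibility at limits -/
lemma ord_opow_dvd_of_forall_lt {o a : Ordinal.{0}} (ho : Order.IsSuccLimit o)
    (h : ∀ b < o, ω ^ b ∣ a) : ω ^ o ∣ a := by
  rcases eq_or_ne a 0 with rfl | ha
  · exact dvd_zero _
  set r := a % ω ^ o with hr
  rcases eq_or_ne r 0 with h0 | h0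
  · exact Ordinal.dvd_iff_mod_eq_zero.2 h0
  have hrlt : r < ω ^ o := Ordinal.mod_lt a (Ordinal.opow_ne_zero o Ordinal.omega0_ne_zero)
  set b := Ordinal.log ω r + 1 with hb
  have hblt : b < o := by
    refine ho.succ_lt ?_
    by_contra hle
    push_neg at hle
    exact absurd ((Ordinal.opow_le_opow_right Ordinal.omega0_pos hle).trans
      (Ordinal.opow_log_le_self ω h0)) (not_le.2 hrlt)
  have hrb : r < ω ^ b := Ordinal.lt_opow_succ_log_self Ordinal.one_lt_omega0 r
  have hdvd_a : ω ^ b ∣ a := h b hblt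
  have hdvd_q : ω ^ b ∣ ω ^ o * (a / ω ^ o) :=
    Dvd.dvd.mul_right (Ordinal.opow_dvd_opow ω hblt.le) _
  have : ω ^ b ∣ r := by
    have := ord_dvd_sub hdvd_a hdvd_q
    rwa [← Ordinal.mod_def] at this
  exact absurd (ord_dvd_lt_eq_zero this hrb) h0

/-- accumulation by multiples of ω^b forces divisibility by ω^(b+1) -/
lemma ord_acc_dvd {b a : Ordinal.{0}} {S : Set Ordinal.{0}}
    (hS : ∀ z ∈ S, ω ^ b ∣ z) (h : a.IsAcc S) : ω ^ (b + 1) ∣ a := by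
  have ha : a ≠ 0 := h.pos.ne'
  have hb0 : (0:Ordinal) < ω ^ b := Ordinal.opow_pos b Ordinal.omega0_pos
  -- first: ω ^ b ∣ a
  have h1 : ω ^ b ∣ a := by
    by_contra hnd
    have hr : a % ω ^ b ≠ 0 := fun h' => hnd (Ordinal.dvd_iff_mod_eq_zero.2 h')
    set q := a / ω ^ b
    have hqa : ω ^ b * q < a := by
      conv_rhs => rw [← Ordinal.div_add_mod a (ω ^ b)]
      exact lt_add_of_pos_right _ (pos_iff_ne_zero.2 hr)
    obtain ⟨z, hzS, hz1, hz2⟩ := h.forall_lt _ hqa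
    obtain ⟨s, rfl⟩ := hS z hzS
    have hqs : q < s := (mul_lt_mul_iff_right₀ hb0).1 hz1
    have : a < ω ^ b * s := by
      calc a = ω ^ b * q + a % ω ^ b := (Ordinal.div_add_mod a (ω ^ b)).symm
      _ < ω ^ b * q + ω ^ b := (add_lt_add_iff_left (ω ^ b * q)).2 (Ordinal.mod_lt a hb0.ne')
      _ = ω ^ b * (q + 1) := by rw [mul_add_one]
      _ ≤ ω ^ b * s := mul_le_mul_right (Order.add_one_le_of_lt hqs) _
    exact absurd hz2 (not_lt.2 this.le)
  obtain ⟨q, rfl⟩ := h1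
  have hq0 : q ≠ 0 := by rintro rfl; simp at ha
  -- q is a limit
  have hql : Order.IsSuccLimit q := by
    rcases Ordinal.zero_or_succ_or_isSuccLimit q with rfl | ⟨q', rfl⟩ | hl
    · simp at ha
    · exfalso
      have hlt : ω ^ b * q' < ω ^ b * Order.succ q' :=
        (mul_lt_mul_iff_right₀ hb0).2 (Order.lt_succ q')
      obtain ⟨z, hzS, hz1, hz2⟩ := h.forall_lt _ hlt
      obtain ⟨s, rfl⟩ := hS z hzS
      have h1' : q' < s := (mul_lt_mul_iff_right₀ hb0).1 hz1
      have h2' : s < Order.succ q' := (mul_lt_mul_iff_right₀ hb0).1 hz2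
      exact absurd h2' (not_lt.2 (Order.succ_le_of_lt h1'))
    · exact hl
  obtain ⟨k, rfl⟩ := (Ordinal.isSuccLimit_iff_omega0_dvd.1 hql).2
  exact ⟨k, by rw [Ordinal.opow_add, Ordinal.opow_one, mul_assoc]⟩

/-- decomposition of a rank-β point -/
lemma ord_decomp {x b : Ordinal.{0}} (hx : x ≠ 0) (h1 : ω ^ b ∣ x) (h2 : ¬ ω ^ (b+1) ∣ x) :
    ∃ m, x = ω ^ b * m + ω ^ b := by
  obtain ⟨q, rfl⟩ := h1
  have hq0 : q ≠ 0 := by rintro rfl; simp at hx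
  rcases Ordinal.zero_or_succ_or_isSuccLimit q with rfl | ⟨m, rfl⟩ | hl
  · exact absurd rfl hq0
  · exact ⟨m, by rw [Ordinal.mul_succ]⟩
  · exfalso
    obtain ⟨k, rfl⟩ := (Ordinal.isSuccLimit_iff_omega0_dvd.1 hl).2
    exact h2 ⟨k, by rw [Ordinal.opow_add, Ordinal.opow_one, mul_assoc]⟩

/-- no multiples of ω^(b+1) strictly between consecutive multiples of ω^b -/
lemma ord_no_dvd_in_Ioc {b m z : Ordinal.{0}} (hz0 : z ≠ 0) (hd : ω ^ (b+1) ∣ z)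
    (h1 : ω ^ b * m < z) (h2 : z ≤ ω ^ b * m + ω ^ b) : False := by
  have hb0 : (0:Ordinal) < ω ^ b := Ordinal.opow_pos b Ordinal.omega0_pos
  obtain ⟨k, rfl⟩ := hd
  have hk0 : k ≠ 0 := by rintro rfl; simp at hz0
  rw [Ordinal.opow_add, Ordinal.opow_one, mul_assoc] at h1 h2
  have hlim : Order.IsSuccLimit (ω * k) := Ordinal.isSuccLimit_iff_omega0_dvd.2
    ⟨by rintro h; rw [mul_eq_zero] at h; exact h.elim (fun h' => Ordinal.omega0_ne_zero h') hk0, ⟨k, rfl⟩⟩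
  have e1 : m < ω * k := (mul_lt_mul_iff_right₀ hb0).1 h1
  have e2 : ω * k ≤ m + 1 := by
    have : ω ^ b * (ω * k) ≤ ω ^ b * (m + 1) := by rwa [mul_add_one]
    exact le_of_mul_le_mul_left this hb0
  have := hlim.succ_lt e1
  rw [Order.succ_eq_add_one] at this
  exact absurd e2 (not_le.2 this)

lemma cbIter_eq (E : Type*) [TopologicalSpace E] (o : Ordinal.{0}) :
    cbIter E o = ⋂ b : {b : Ordinal.{0} // b < o}, cbDerivedSet (cbIter E b.1) := by
  rw [cbIter]

lemma mem_cbIter {E : Type*} [TopologicalSpace E] {o : Ordinal.{0}} {a : E} :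
    a ∈ cbIter E o ↔ ∀ b < o, AccPt a (Filter.principal (cbIter E b)) := by
  rw [cbIter_eq, Set.mem_iInter]
  exact ⟨fun h b hb => h ⟨b, hb⟩, fun h b => h b.1 b.2⟩

lemma cbIter_anti {E : Type*} [TopologicalSpace E] {o o' : Ordinal.{0}} (h : o ≤ o') :
    cbIter E o' ⊆ cbIter E o := fun a ha =>
  mem_cbIter.2 fun b hb => mem_cbIter.1 ha b (hb.trans_le h)

/-- Open embeddings preserve membership in the CB filtration. -/
lemma cbIter_openEmbedding {E : Type*} [TopologicalSpace E] {V : Set E} (hV : IsOpen V)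
    {f : V → E} (hf : Topology.IsOpenEmbedding f) (o : Ordinal.{0}) :
    ∀ w : V, (w : E) ∈ cbIter E o → f w ∈ cbIter E o := by
  induction o using Ordinal.induction with
  | h o IH =>
    intro w hw
    rw [mem_cbIter]
    intro b hb
    have hacc : AccPt (w : E) (Filter.principal (cbIter E b)) := mem_cbIter.1 hw b hb
    rw [accPt_iff_nhds] at hacc ⊢
    intro U hU
    -- preimage of U under f, pushed to E via val
    have hUopen : IsOpen (interior U) := isOpen_interior
    have hpre : IsOpen ((Subtype.val : V → E) '' (f ⁻¹' interior U)) :=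
      hV.isOpenEmbedding_subtypeVal.isOpenMap _ (hf.continuous.isOpen_preimage _ hUopen)
    have hwmem : (w : E) ∈ (Subtype.val : V → E) '' (f ⁻¹' interior U) :=
      ⟨w, mem_interior_iff_mem_nhds.2 hU, rfl⟩
    obtain ⟨z, ⟨hz1, hz2⟩, hzne⟩ := hacc _ (hpre.mem_nhds hwmem)
    obtain ⟨z', hz', rfl⟩ := hz1
    refine ⟨f z', ⟨interior_subset hz', IH b hb z' hz2⟩, ?_⟩
    intro hEq
    exact hzne (congrArg Subtype.val (hf.injective hEq))

/-- AccPt in the subtype `Iic T` corresponds to `Ordinal.IsAcc` of the image. -/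
lemma accPt_iic_iff {T : Ordinal.{0}} (p : ↥(Set.Iic T)) (S : Set ↥(Set.Iic T)) :
    AccPt p (Filter.principal S) ↔ Ordinal.IsAcc p.1 (Subtype.val '' S) := by
  have hval : Function.Injective (Subtype.val : ↥(Set.Iic T) → Ordinal) := Subtype.val_injective
  unfold Ordinal.IsAcc AccPt
  have h1 : 𝓝[≠] p = Filter.comap Subtype.val (𝓝[≠] (p : Ordinal)) := by
    rw [nhdsWithin, nhdsWithin, Filter.comap_inf, ← nhds_subtype_eq_comap, Filter.comap_principal]
    congr 1
    congr 1
    ext z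
    simp [Subtype.ext_iff]
    exact p.2
  have h2 : Filter.principal S = Filter.comap Subtype.val (Filter.principal (Subtype.val '' S)) := by
    rw [Filter.comap_principal, Set.preimage_image_eq S hval]
  rw [h1, h2, ← Filter.comap_inf]
  constructor
  · intro h
    by_contra hbot
    rw [not_neBot] at hbot
    rw [hbot, Filter.comap_bot] at h
    exact h.ne rfl
  · intro h
    refine Filter.NeBot.comap_of_range_mem h ?_
    have : Subtype.val '' S ∈ 𝓝[≠] (p : Ordinal) ⊓ Filter.principal (Subtype.val '' S) :=
      Filter.mem_inf_of_right (Filter.mem_principal_self _)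
    filter_upwards [this] with z hz
    obtain ⟨z', _, rfl⟩ := hz
    exact ⟨z', rfl⟩

lemma cbIter_zero' {E : Type*} [TopologicalSpace E] : cbIter E 0 = Set.univ := by
  ext a; simp only [Set.mem_univ, iff_true, mem_cbIter]
  intro b hb; exact absurd hb not_lt_zero

/-- Characterization of the CB filtration on `Iic T`. -/
lemma cbIter_iic_char {T : Ordinal.{0}} :
    ∀ o : Ordinal.{0}, 1 ≤ o →
      cbIter ↥(Set.Iic T) o = {a : ↥(Set.Iic T) | a.1 ≠ 0 ∧ ω ^ o ∣ a.1} := by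
  intro o
  induction o using Ordinal.induction with
  | h o IH =>
    intro ho1
    have himg : ∀ b < o, Subtype.val '' (cbIter ↥(Set.Iic T) b) ⊆ {z : Ordinal | ω ^ b ∣ z} := by
      intro b hb z hz
      obtain ⟨z', hz', rfl⟩ := hz
      rcases eq_or_ne b 0 with rfl | hb0
      · simp
      · rw [IH b hb (Ordinal.one_le_iff_ne_zero.2 hb0)] at hz'
        exact hz'.2
    ext a
    simp only [Set.mem_setOf_eq]
    constructor
    · intro ha
      have key : ∀ b < o, ω ^ (b + 1) ∣ a.1 ∧ a.1 ≠ 0 := by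
        intro b hb
        have hacc := (accPt_iic_iff a _).1 (mem_cbIter.1 ha b hb)
        exact ⟨ord_acc_dvd (fun z hz => himg b hb hz) hacc, hacc.pos.ne'⟩
      have h0 := key 0 (lt_of_lt_of_le zero_lt_one ho1)
      refine ⟨h0.2, ?_⟩
      rcases Ordinal.zero_or_succ_or_isSuccLimit o with rfl | ⟨o', rfl⟩ | hl
      · exact absurd ho1 (by simp)
      · rw [Order.succ_eq_add_one]
        exact (key o' (by rw [Order.succ_eq_add_one]; exact lt_add_one o')).1
      · exact ord_opow_dvd_of_forall_lt hl fun b hb =>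
          dvd_trans (Ordinal.opow_dvd_opow ω (le_of_lt (lt_add_one b))) (key b hb).1
    · rintro ⟨ha0, hdvd⟩
      rw [mem_cbIter]
      intro b hb
      rw [accPt_iic_iff]
      rw [Ordinal.isAcc_iff]
      refine ⟨ha0, fun p hp => ?_⟩
      have hdvd' : ω ^ (b + 1) ∣ a.1 :=
        dvd_trans (Ordinal.opow_dvd_opow ω (Order.add_one_le_of_lt hb)) hdvd
      obtain ⟨k, hk⟩ := hdvd'
      rw [Ordinal.opow_add, Ordinal.opow_one, mul_assoc] at hk
      have hk0 : k ≠ 0 := by rintro rfl; exact ha0 (by simpa using hk)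
      have hb0 : (0:Ordinal) < ω ^ b := Ordinal.opow_pos b Ordinal.omega0_pos
      have hlim : Order.IsSuccLimit (ω * k) := Ordinal.isSuccLimit_iff_omega0_dvd.2
        ⟨by rintro h; rw [mul_eq_zero] at h;
            exact h.elim (fun h' => Ordinal.omega0_ne_zero h') hk0, ⟨k, rfl⟩⟩
      set s := p / ω ^ b with hs
      set z := ω ^ b * (s + 1) with hz
      have hpz : p < z := by
        calc p = ω ^ b * s + p % ω ^ b := (Ordinal.div_add_mod p (ω ^ b)).symm
        _ < ω ^ b * s + ω ^ b := (add_lt_add_iff_left _).2 (Ordinal.mod_lt p hb0.ne')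
        _ = z := by rw [hz, mul_add_one]
      have hslt : s < ω * k := by
        have h1 : ω ^ b * s ≤ p := Ordinal.mul_div_le p (ω ^ b)
        have h2 : ω ^ b * s < ω ^ b * (ω * k) := lt_of_le_of_lt h1 (hp.trans_eq hk)
        exact (mul_lt_mul_iff_right₀ hb0).1 h2
      have hzlt : z < a.1 := by
        rw [hk, hz]
        exact (mul_lt_mul_iff_right₀ hb0).2 (by
          have := hlim.succ_lt hslt
          rwa [Order.succ_eq_add_one] at this)
      have hzT : z ≤ T := (hzlt.trans_le a.2).le
      have hz0 : z ≠ 0 := fun h => (h ▸ hpz).not_ge (zero_le : (0:Ordinal) ≤ p)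
      refine ⟨z, ?_, hpz, hzlt⟩
      refine ⟨⟨z, hzT⟩, ?_, rfl⟩
      rcases eq_or_ne b 0 with rfl | hb0'
      · rw [cbIter_zero']; trivial
      · rw [IH b hb (Ordinal.one_le_iff_ne_zero.2 hb0')]
        exact ⟨hz0, ⟨s + 1, rfl⟩⟩

/-- Half-open interval in `Iic T`. -/
def IocE (T a b : Ordinal.{0}) : Set ↥(Set.Iic T) := {z | a < z.1 ∧ z.1 ≤ b}

lemma isOpen_IocE (T a b : Ordinal.{0}) : IsOpen (IocE T a b) := by
  have : IocE T a b = (Subtype.val : ↥(Set.Iic T) → Ordinal) ⁻¹' (Set.Ioi a ∩ Set.Iio (b+1)) := by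
    ext z
    simp only [IocE, Set.mem_setOf_eq, Set.mem_preimage, Set.mem_inter_iff, Set.mem_Ioi,
      Set.mem_Iio]
    rw [Order.lt_add_one_iff]
  rw [this]
  exact (IsOpen.inter isOpen_Ioi isOpen_Iio).preimage continuous_subtype_val

lemma exists_IocE_subset {T : Ordinal.{0}} {x : ↥(Set.Iic T)} (hx : x.1 ≠ 0)
    {U : Set ↥(Set.Iic T)} (hU : IsOpen U) (hxU : x ∈ U) :
    ∃ a < x.1, IocE T a x.1 ⊆ U := by
  obtain ⟨t, ht, htU⟩ := isOpen_induced_iff.1 hU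
  have hmem : t ∈ 𝓝 (x.1 : Ordinal) := ht.mem_nhds (by rw [← htU] at hxU; exact hxU)
  obtain ⟨a, ha, hsub⟩ := (SuccOrder.hasBasis_nhds_Ioc_of_exists_lt ⟨0, pos_iff_ne_zero.2 hx⟩).mem_iff.1 hmem
  exact ⟨a, ha, fun z hz => by rw [← htU]; exact hsub ⟨hz.1, hz.2⟩⟩

lemma topo_eq_of_subsingleton {Y : Type*} [Subsingleton Y] (t1 t2 : TopologicalSpace Y) :
    t1 = t2 := by
  apply TopologicalSpace.ext
  ext s
  rcases Set.eq_empty_or_nonempty s with rfl | hs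
  · simp [@isOpen_empty Y t1, @isOpen_empty Y t2]
  · have : s = Set.univ := by
      ext z
      simp only [Set.mem_univ, iff_true]
      obtain ⟨w, hw⟩ := hs
      rwa [Subsingleton.elim z w]
    rw [this]
    simp [@isOpen_univ Y t1, @isOpen_univ Y t2]

lemma singleton_isOpenEmbedding {X : Type*} [TopologicalSpace X] (p q : X)
    (hq : IsOpen ({q} : Set X)) :
    Topology.IsOpenEmbedding (fun _ : ↥({p} : Set X) => q) := by
  haveI : Subsingleton ↥({p} : Set X) := ⟨fun a b => Subtype.ext (a.2.trans b.2.symm)⟩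
  haveI : Nonempty ↥({p} : Set X) := ⟨⟨p, rfl⟩⟩
  refine ⟨⟨⟨topo_eq_of_subsingleton _ _⟩, fun a b _ => Subsingleton.elim a b⟩, ?_⟩
  rw [Set.range_const]
  exact hq

lemma iocE_shift {T c b d : Ordinal.{0}} (hcd : c + d ≤ T) (hbd : b + d ≤ T) :
    ∃ f : ↥(IocE T c (c+d)) → ↥(Set.Iic T), Topology.IsOpenEmbedding f ∧
      ∀ z, f z ∈ IocE T b (b+d) := by
  haveI hOC : ∀ u v : Ordinal.{0}, OrdConnected (IocE T u v) := fun u v =>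
    ⟨fun z hz w hw t ht => ⟨lt_of_lt_of_le hz.1 (Subtype.coe_le_coe.2 ht.1),
      le_trans (Subtype.coe_le_coe.2 ht.2) hw.2⟩⟩
  have key : ∀ (u v : Ordinal.{0}), u + d ≤ T → v + d ≤ T →
      ∀ z : ↥(IocE T u (u+d)), v + (z.1.1 - u) ∈ Set.Ioc v (v+d) ∧ v + (z.1.1 - u) ≤ T := by
    intro u v _ hvd z
    have h1 : z.1.1 - u ≤ d := Ordinal.sub_le.2 z.2.2
    have h2 : (0:Ordinal) < z.1.1 - u := pos_iff_ne_zero.2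
      (fun h => (Ordinal.sub_eq_zero_iff_le.1 h).not_gt z.2.1)
    refine ⟨⟨?_, ?_⟩, ?_⟩
    · simpa using (add_lt_add_iff_left v).2 h2
    · exact add_le_add_right h1 v
    · exact (add_le_add_right h1 v).trans hvd
  let e : ↥(IocE T c (c+d)) ≃o ↥(IocE T b (b+d)) := {
    toFun := fun z => ⟨⟨b + (z.1.1 - c), (key c b hcd hbd z).2⟩,
      ⟨(key c b hcd hbd z).1.1, (key c b hcd hbd z).1.2⟩⟩
    invFun := fun z => ⟨⟨c + (z.1.1 - b), (key b c hbd hcd z).2⟩,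
      ⟨(key b c hbd hcd z).1.1, (key b c hbd hcd z).1.2⟩⟩
    left_inv := fun z => Subtype.ext (Subtype.ext (by
      simp only [Ordinal.add_sub_cancel]
      exact Ordinal.add_sub_cancel_of_le z.2.1.le))
    right_inv := fun z => Subtype.ext (Subtype.ext (by
      simp only [Ordinal.add_sub_cancel]
      exact Ordinal.add_sub_cancel_of_le z.2.1.le))
    map_rel_iff' := by
      intro z w
      show b + (z.1.1 - c) ≤ b + (w.1.1 - c) ↔ z ≤ w
      rw [add_le_add_iff_left, Ordinal.sub_le, Ordinal.add_sub_cancel_of_le w.2.1.le]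
      rfl }
  refine ⟨fun z => (e z).1, ?_, fun z => (e z).2⟩
  exact ((isOpen_IocE T b (b+d)).isOpenEmbedding_subtypeVal).comp e.toHomeomorph.isOpenEmbedding

lemma isOpen_singleton_zeroE {T : Ordinal.{0}} {y : ↥(Set.Iic T)} (hy : y.1 = 0) :
    IsOpen ({y} : Set ↥(Set.Iic T)) := by
  have : ({y} : Set ↥(Set.Iic T)) = (Subtype.val : ↥(Set.Iic T) → Ordinal) ⁻¹' (Set.Iio 1) := by
    ext z
    simp only [Set.mem_singleton_iff, Set.mem_preimage, Set.mem_Iio, Ordinal.lt_one_iff_zero,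
      Subtype.ext_iff, hy]
  rw [this]
  exact isOpen_Iio.preimage continuous_subtype_val

lemma iocE_singleton {T a : Ordinal.{0}} (haT : a + 1 ≤ T) :
    IocE T a (a+1) = {(⟨a+1, haT⟩ : ↥(Set.Iic T))} := by
  ext z
  constructor
  · rintro ⟨h1, h2⟩
    exact Subtype.ext (le_antisymm h2 (Order.add_one_le_of_lt h1))
  · rintro rfl
    exact ⟨lt_add_one a, le_refl _⟩

lemma preceq_iff_rank_le_gen (T : Ordinal.{0}) (β γ : Ordinal.{0})
    (x y : ↥(Set.Iic T))
    (hx : HasCBRank x β) (hy : HasCBRank y γ) :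
    Preceq y x ↔ γ ≤ β := by
  have one_le_succ : ∀ o : Ordinal.{0}, (1:Ordinal) ≤ o + 1 := fun o => by
    simpa using add_le_add_left (zero_le : (0:Ordinal) ≤ o) 1
  have rank_facts : ∀ {z : ↥(Set.Iic T)} {o : Ordinal.{0}}, HasCBRank z o →
      (z.1 = 0 → o = 0) ∧ (z.1 ≠ 0 → ω ^ o ∣ z.1 ∧ ¬ ω ^ (o+1) ∣ z.1) := by
    intro z o hz
    constructor
    · intro hz0
      by_contra ho
      have h1 : (1:Ordinal) ≤ o := Ordinal.one_le_iff_ne_zero.2 ho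
      have hmem := hz.1
      rw [cbIter_iic_char o h1] at hmem
      exact hmem.1 hz0
    · intro hz0
      constructor
      · rcases eq_or_ne o 0 with rfl | ho
        · rw [Ordinal.opow_zero]; exact one_dvd _
        · have hmem := hz.1
          rw [cbIter_iic_char o (Ordinal.one_le_iff_ne_zero.2 ho)] at hmem
          exact hmem.2
      · intro hdvd
        apply hz.2
        rw [cbIter_iic_char (o+1) (one_le_succ o)]
        exact ⟨hz0, hdvd⟩
  constructor
  · intro h
    by_contra hgb
    push_neg at hgb
    rcases eq_or_ne x.1 0 with cx | cx
    · obtain ⟨V, hV, hyV, f, hf, hran⟩ := h {x} (isOpen_singleton_zeroE cx) rfl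
      have hVy : ∀ z ∈ V, z = y := by
        intro z hz
        have h1 : f ⟨z, hz⟩ = x := hran (Set.mem_range_self _)
        have h2 : f ⟨y, hyV⟩ = x := hran (Set.mem_range_self _)
        exact congrArg Subtype.val (hf.injective (h1.trans h2.symm))
      have hacc : AccPt y (Filter.principal (cbIter ↥(Set.Iic T) 0)) :=
        mem_cbIter.1 hy.1 0 (lt_of_le_of_lt (zero_le : (0:Ordinal) ≤ β) hgb)
      obtain ⟨z, ⟨hz1, _⟩, hz2⟩ := accPt_iff_nhds.1 hacc V (hV.mem_nhds hyV)
      exact hz2 (hVy z hz1)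
    · obtain ⟨hdvd, hndvd⟩ := (rank_facts hx).2 cx
      obtain ⟨m₀, hdec⟩ := ord_decomp cx hdvd hndvd
      have ha₀x : ω ^ β * m₀ < x.1 := by
        rw [hdec]
        simpa using (add_lt_add_iff_left (ω ^ β * m₀)).2 (Ordinal.opow_pos β Ordinal.omega0_pos)
      obtain ⟨V, hV, hyV, f, hf, hran⟩ := h (IocE T (ω ^ β * m₀) x.1)
        (isOpen_IocE _ _ _) ⟨ha₀x, le_refl _⟩
      have hfy : f ⟨y, hyV⟩ ∈ cbIter ↥(Set.Iic T) (β+1) :=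
        cbIter_anti (Order.add_one_le_of_lt hgb) (cbIter_openEmbedding hV hf γ ⟨y, hyV⟩ hy.1)
      rw [cbIter_iic_char (β+1) (one_le_succ β)] at hfy
      have hfyU := hran (Set.mem_range_self (⟨y, hyV⟩ : ↥V))
      exact ord_no_dvd_in_Ioc hfy.1 hfy.2 hfyU.1 (hfyU.2.trans_eq hdec)
  · intro hγβ U hU hxU
    rcases eq_or_ne y.1 0 with cy | cy
    · rcases eq_or_ne x.1 0 with cx | cx
      · refine ⟨{y}, isOpen_singleton_zeroE cy, rfl, fun _ => x,
          singleton_isOpenEmbedding y x (isOpen_singleton_zeroE cx), ?_⟩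
        rintro z ⟨w, rfl⟩
        exact hxU
      · obtain ⟨a, ha, hsub⟩ := exists_IocE_subset cx hU hxU
        have haT : a + 1 ≤ T := Order.add_one_le_of_lt (ha.trans_le x.2)
        refine ⟨{y}, isOpen_singleton_zeroE cy, rfl, fun _ => (⟨a+1, haT⟩ : ↥(Set.Iic T)),
          singleton_isOpenEmbedding y _ (by rw [← iocE_singleton haT]; exact isOpen_IocE _ _ _), ?_⟩
        rintro z ⟨w, rfl⟩
        exact hsub ⟨lt_add_one a, Order.add_one_le_of_lt ha⟩
    · obtain ⟨hdvdy, hndvdy⟩ := (rank_facts hy).2 cy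
      obtain ⟨m, hdecy⟩ := ord_decomp cy hdvdy hndvdy
      set c := ω ^ γ * m with hcdef
      rcases eq_or_ne x.1 0 with cx | cx
      · have hβ0 : β = 0 := (rank_facts hx).1 cx
        have hγ0 : γ = 0 := le_antisymm (hβ0 ▸ hγβ) (zero_le : (0:Ordinal) ≤ γ)
        have hy1 : y.1 = c + 1 := by
          rw [hdecy, hcdef, hγ0, Ordinal.opow_zero]
        have hyT : c + 1 ≤ T := hy1 ▸ y.2
        have hyE : y = (⟨c+1, hyT⟩ : ↥(Set.Iic T)) := Subtype.ext hy1
        refine ⟨{y}, ?_, rfl, fun _ => x,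
          singleton_isOpenEmbedding y x (isOpen_singleton_zeroE cx), ?_⟩
        · rw [hyE, ← iocE_singleton hyT]; exact isOpen_IocE _ _ _
        · rintro z ⟨w, rfl⟩
          exact hxU
      · obtain ⟨hdvdx, hndvdx⟩ := (rank_facts hx).2 cx
        obtain ⟨m₀, hdecx⟩ := ord_decomp cx hdvdx hndvdx
        set a₀ := ω ^ β * m₀ with ha₀def
        obtain ⟨a, ha, hsub⟩ := exists_IocE_subset cx hU hxU
        set b := max a a₀ with hbdef
        have ha₀x : a₀ < x.1 := by
          rw [hdecx]
          simpa using (add_lt_add_iff_left a₀).2 (Ordinal.opow_pos β Ordinal.omega0_pos)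
        have hbx : b < x.1 := max_lt ha ha₀x
        have hbr : a₀ + (b - a₀) = b := Ordinal.add_sub_cancel_of_le (le_max_right a a₀)
        have hrβ : b - a₀ < ω ^ β := by
          have h' : a₀ + (b - a₀) < a₀ + ω ^ β := by rw [hbr, ← hdecx]; exact hbx
          exact (add_lt_add_iff_left a₀).1 h'
        have hbγ : b + ω ^ γ ≤ x.1 := by
          calc b + ω ^ γ = a₀ + ((b - a₀) + ω ^ γ) := by rw [← add_assoc, hbr]
          _ ≤ a₀ + ((b - a₀) + ω ^ β) := add_le_add_right (add_le_add_right
              (Ordinal.opow_le_opow_right Ordinal.omega0_pos hγβ) _) _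
          _ = a₀ + ω ^ β := by rw [Ordinal.add_absorp hrβ (le_refl (ω ^ β))]
          _ = x.1 := hdecx.symm
        have hcT : c + ω ^ γ ≤ T := by rw [← hdecy]; exact y.2
        obtain ⟨f, hf, hmem⟩ := iocE_shift (T := T) (c := c) (b := b) (d := ω ^ γ)
          hcT (hbγ.trans x.2)
        refine ⟨IocE T c (c + ω ^ γ), isOpen_IocE _ _ _, ⟨?_, hdecy.le⟩, f, hf, ?_⟩
        · rw [hdecy]
          simpa using (add_lt_add_iff_left c).2 (Ordinal.opow_pos γ Ordinal.omega0_pos)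
        · rintro z ⟨w, rfl⟩
          obtain ⟨h1, h2⟩ := hmem w
          exact hsub ⟨lt_of_le_of_lt (le_max_left a a₀) h1, h2.trans hbγ⟩

theorem preceq_iff_rank_le (α : Ordinal.{0}) (hα : α.card ≤ Cardinal.aleph0)
    (n : ℕ) (hn : 1 ≤ n) (β γ : Ordinal.{0})
    (x y : ↥(Set.Iic (Ordinal.omega0 ^ α * n)))
    (hx : HasCBRank x β) (hy : HasCBRank y γ) :
    Preceq y x ↔ γ ≤ β :=
  preceq_iff_rank_le_gen _ β γ x y hx hy
end

section
/- Let E be a topological space and suppose x ∈ E has a stable neighborhood, and y ∼ x. Then y has a stable neighborhood. -/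
/-- An open neighborhood `U` of `x` is stable if every smaller open neighborhood of `x`
contains a homeomorphic copy of `U` (as a subspace). -/
def IsStableNbhd {E : Type*} [TopologicalSpace E] (x : E) (U : Set E) : Prop :=
  IsOpen U ∧ x ∈ U ∧
    ∀ U' : Set E, IsOpen U' → x ∈ U' → U' ⊆ U →
      ∃ W : Set E, W ⊆ U' ∧ Nonempty (↥W ≃ₜ ↥U)

/-- An embedding restricts to a homeomorphism between a set and its image. -/
noncomputable def homeoImageOfEmbedding {X E : Type*} [TopologicalSpace X] [TopologicalSpace E]
    {g : X → E} (hg : Topology.IsEmbedding g) (s : Set X) : ↥s ≃ₜ ↥(g '' s) := by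
  have h : Topology.IsEmbedding (g ∘ (Subtype.val : s → X)) :=
    hg.comp Topology.IsEmbedding.subtypeVal
  have hr : Set.range (g ∘ (Subtype.val : s → X)) = g '' s := by
    rw [Set.range_comp, Subtype.range_coe]
  exact (Topology.IsEmbedding.toHomeomorph (f := _) h).trans (Homeomorph.setCongr hr)

/-- Subtype of subtype: for `s : Set ↥B`, `↥(val '' s) ≃ₜ ↥s`. -/
noncomputable def homeoValImage {E : Type*} [TopologicalSpace E] {B : Set E} (s : Set ↥B) :
    ↥((Subtype.val : B → E) '' s) ≃ₜ ↥s :=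
  (homeoImageOfEmbedding Topology.IsEmbedding.subtypeVal s).symm

/-- In any open neighborhood of `y` there is a copy of a stable neighborhood `U` of `x`,
provided `x ≼ y`. -/
theorem copy_of_stable {E : Type*} [TopologicalSpace E] {x y : E} {U : Set E}
    (hU : IsStableNbhd x U) (hxy : Preceq x y) :
    ∀ V' : Set E, IsOpen V' → y ∈ V' → ∃ S : Set E, S ⊆ V' ∧ Nonempty (↥S ≃ₜ ↥U) := by
  intro V' hV' hyV'
  obtain ⟨W, hWopen, hxW, g, hg, hgV'⟩ := hxy V' hV' hyV'
  -- W ∩ U is an open nbhd of x inside U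
  obtain ⟨S₀, hS₀sub, ⟨e₀⟩⟩ := hU.2.2 (W ∩ U) (hWopen.inter hU.1) ⟨hxW, hU.2.1⟩
    Set.inter_subset_right
  -- push S₀ into V' via g
  have hS₀W : S₀ ⊆ W := hS₀sub.trans Set.inter_subset_left
  set T : Set ↥W := (Subtype.val : W → E) ⁻¹' S₀ with hT
  refine ⟨g '' T, ?_, ⟨?_⟩⟩
  · exact (Set.image_subset_range g T).trans hgV'
  · -- ↥(g '' T) ≃ₜ ↥T ≃ₜ ↥S₀ ≃ₜ ↥U
    have h1 : ↥(g '' T) ≃ₜ ↥T := (homeoImageOfEmbedding hg.isEmbedding T).symm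
    have hTS : (Subtype.val : W → E) '' T = S₀ := by
      rw [hT, Subtype.image_preimage_coe, Set.inter_eq_right.mpr hS₀W]
    have h2 : ↥T ≃ₜ ↥S₀ := (homeoValImage T).symm.trans (Homeomorph.setCongr hTS)
    exact h1.trans (h2.trans e₀)

theorem stable_nbhd_of_equiv {E : Type*} [TopologicalSpace E] {x y : E}
    (hx : ∃ U : Set E, IsStableNbhd x U)
    (hxy : Preceq x y ∧ Preceq y x) :
    ∃ V : Set E, IsStableNbhd y V := by
  obtain ⟨U, hU⟩ := hx
  obtain ⟨V, hVopen, hyV, f, hf, hfU⟩ := hxy.2 U hU.1 hU.2.1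
  refine ⟨V, hVopen, hyV, ?_⟩
  intro V' hV'open hyV' hV'V
  -- a copy of U inside V'
  obtain ⟨S, hSV', ⟨e⟩⟩ := copy_of_stable hU hxy.1 V' hV'open hyV'
  -- V is homeomorphic to range f ⊆ U
  have hV : ↥V ≃ₜ ↥(Set.range f) := Topology.IsEmbedding.toHomeomorph (f := f) hf.isEmbedding
  set T₀ : Set ↥U := (Subtype.val : U → E) ⁻¹' (Set.range f) with hT₀
  have hT₀eq : (Subtype.val : U → E) '' T₀ = Set.range f := by
    rw [hT₀, Subtype.image_preimage_coe, Set.inter_eq_right.mpr hfU]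
  -- copy of V inside S
  refine ⟨(Subtype.val : S → E) '' (e.symm '' T₀), ?_, ⟨?_⟩⟩
  · exact (Set.image_subset_range _ _).trans (by rw [Subtype.range_coe]; exact hSV')
  · have h1 : ↥((Subtype.val : S → E) '' (e.symm '' T₀)) ≃ₜ ↥(e.symm '' T₀) :=
      homeoValImage (e.symm '' T₀)
    have h2 : ↥(e.symm '' T₀) ≃ₜ ↥T₀ := (e.symm.image T₀).symm
    have h3 : ↥T₀ ≃ₜ ↥(Set.range f) :=
      (homeoValImage T₀).symm.trans (Homeomorph.setCongr hT₀eq)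
    exact h1.trans (h2.trans (h3.trans hV.symm))
end

section
/- Let E be a countable compact Hausdorff space homeomorphic to ω^α·n + 1 with n ≥ 2 and α a countable ordinal. Then E is not self-similar. -/
open Filter Topology Set Ordinal Order

section Top
variable {X Y : Type*} [TopologicalSpace X] [TopologicalSpace Y]

lemma accPt_image_iff {f : X → Y} (hf : Topology.IsOpenEmbedding f) {x : X} {A : Set X} :
    AccPt (f x) (𝓟 (f '' A)) ↔ AccPt x (𝓟 A) := by
  constructor
  · intro h
    have hcomap : 𝓝[≠] x ⊓ 𝓟 A = comap f (𝓝[≠] (f x) ⊓ 𝓟 (f '' A)) := by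
      have hpre : f ⁻¹' {f x}ᶜ = {x}ᶜ := by ext y; simp [hf.injective.eq_iff]
      rw [comap_inf, comap_principal, Function.Injective.preimage_image hf.injective,
        nhdsWithin, nhdsWithin, comap_inf, comap_principal, hpre, hf.nhds_eq_comap]
    rw [AccPt, hcomap]
    refine Filter.NeBot.comap_of_range_mem h ?_
    exact mem_inf_of_left (mem_nhdsWithin_of_mem_nhds (hf.isOpen_range.mem_nhds ⟨x, rfl⟩))
  · intro h
    have := h.map hf.continuous.continuousAt hf.injective
    rwa [Filter.map_principal] at this

lemma mem_derivedSet_subtype {U : Set X} (hU : IsOpen U) {A : Set ↥U} {x : ↥U} :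
    x ∈ derivedSet A ↔ AccPt (x : X) (𝓟 (Subtype.val '' A)) := by
  rw [mem_derivedSet, ← accPt_image_iff hU.isOpenEmbedding_subtypeVal]

lemma accPt_inter_isOpen {U : Set X} (hU : IsOpen U) {A : Set X} {x : X} (hx : x ∈ U) :
    AccPt x (𝓟 (A ∩ U)) ↔ AccPt x (𝓟 A) := by
  constructor
  · exact fun h => h.mono (principal_mono.2 inter_subset_left)
  · intro h
    rw [accPt_iff_nhds] at h ⊢
    intro V hV
    obtain ⟨y, hy, hyx⟩ := h (V ∩ U) (inter_mem hV (hU.mem_nhds hx))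
    exact ⟨y, ⟨hy.1.1, hy.2, hy.1.2⟩, hyx⟩

end Top

/-- Transfinite Cantor–Bendixson iteration: `CB X α = ⋂ β < α, derivedSet (CB X β)`. -/
noncomputable def CB (X : Type*) [TopologicalSpace X] : Ordinal.{0} → Set X
  | α => ⋂ β : Set.Iio α, derivedSet (CB X β.1)
  termination_by α => α
  decreasing_by exact β.2

lemma CB_def (X : Type*) [TopologicalSpace X] (α : Ordinal.{0}) :
    CB X α = ⋂ β : Set.Iio α, derivedSet (CB X β.1) := by
  rw [CB]

lemma mem_CB {X : Type*} [TopologicalSpace X] {α : Ordinal.{0}} {x : X} :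
    x ∈ CB X α ↔ ∀ β < α, x ∈ derivedSet (CB X β) := by
  rw [CB_def]; simp [Set.mem_iInter, Subtype.forall]

section Homeo

variable {X Y : Type*} [TopologicalSpace X] [TopologicalSpace Y]

lemma Homeomorph.image_derivedSet (f : X ≃ₜ Y) (A : Set X) :
    f '' derivedSet A = derivedSet (f '' A) := by
  apply subset_antisymm (f.continuous.image_derivedSet f.injective)
  have h2 := f.symm.continuous.image_derivedSet (A := f '' A) f.symm.injective
  rw [Set.image_image] at h2
  simp only [Homeomorph.symm_apply_apply, Set.image_id'] at h2
  have := Set.image_mono (f := f) h2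
  rwa [Set.image_image, Set.image_congr' (fun y => f.apply_symm_apply y), Set.image_id'] at this

lemma CB_image_homeomorph (f : X ≃ₜ Y) (α : Ordinal.{0}) :
    f '' CB X α = CB Y α := by
  induction α using Ordinal.induction with
  | h α IH =>
    rw [CB_def, CB_def, Set.image_iInter f.bijective]
    exact Set.iInter_congr fun β => by rw [f.image_derivedSet, IH β.1 β.2]

end Homeo

lemma CB_subtype {X : Type*} [TopologicalSpace X] {U : Set X} (hU : IsOpen U) (α : Ordinal.{0}) :
    CB ↥U α = Subtype.val ⁻¹' CB X α := by
  induction α using Ordinal.induction with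
  | h α IH =>
    rw [CB_def, CB_def, Set.preimage_iInter]
    refine Set.iInter_congr fun β => ?_
    rw [IH β.1 β.2]
    ext x
    rw [mem_derivedSet_subtype hU, Subtype.image_preimage_coe, Set.mem_preimage,
      Set.inter_comm, mem_derivedSet, accPt_inter_isOpen hU x.2]

lemma accPt_multiples {β x : Ordinal} :
    AccPt x (𝓟 {y : Ordinal | ω ^ β ∣ y ∧ (β = 0 ∨ y ≠ 0)}) ↔ (x ≠ 0 ∧ ω ^ (β + 1) ∣ x) := by
  have hωβ : (ω : Ordinal) ^ β ≠ 0 := opow_ne_zero _ omega0_ne_zero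
  have hωβpos : (0 : Ordinal) < ω ^ β := pos_iff_ne_zero.2 hωβ
  rw [show (AccPt x (𝓟 {y : Ordinal | ω ^ β ∣ y ∧ (β = 0 ∨ y ≠ 0)})) =
    Ordinal.IsAcc x {y : Ordinal | ω ^ β ∣ y ∧ (β = 0 ∨ y ≠ 0)} from rfl, Ordinal.isAcc_iff]
  constructor
  · rintro ⟨hx0, h⟩
    refine ⟨hx0, ?_⟩
    have key : ∀ t : Ordinal, ω ^ β * t < x → x ≤ ω ^ β * (t + 1) → False := by
      intro t h1 h2
      obtain ⟨s, hsS, hsI⟩ := h (ω ^ β * t) h1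
      obtain ⟨m, rfl⟩ := hsS.1
      have htm : t < m := (mul_lt_mul_iff_of_pos_left hωβpos).mp hsI.1
      have : ω ^ β * (t + 1) ≤ ω ^ β * m :=
        (mul_le_mul_iff_of_pos_left hωβpos).mpr (Order.add_one_le_of_lt htm)
      exact absurd (hsI.2.trans_le h2) (not_lt.2 this)
    have hdvd : ω ^ β ∣ x := by
      by_contra hnd
      refine key (x / ω ^ β) (lt_of_le_of_ne (Ordinal.mul_div_le x (ω ^ β))
        (fun e => hnd ⟨x / ω ^ β, e.symm⟩)) ?_
      rw [mul_add_one]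
      exact (Ordinal.lt_mul_div_add x hωβ).le
    obtain ⟨d, rfl⟩ := hdvd
    have hd0 : d ≠ 0 := by rintro rfl; exact hx0 (mul_zero _)
    rcases Ordinal.zero_or_succ_or_isSuccLimit d with rfl | ⟨d', rfl⟩ | hdl
    · exact absurd rfl hd0
    · exact absurd (key d' ((mul_lt_mul_iff_of_pos_left hωβpos).mpr (lt_succ d'))
        (le_of_eq (by rw [Ordinal.add_one_eq_succ]))) (fun f => f.elim)
    · obtain ⟨k, rfl⟩ := (Ordinal.isSuccLimit_iff_omega0_dvd.mp hdl).2
      exact ⟨k, by rw [opow_add, opow_one, mul_assoc]⟩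
  · rintro ⟨hx0, k, rfl⟩
    have hk0 : k ≠ 0 := by rintro rfl; exact hx0 (mul_zero _)
    have hx : (ω : Ordinal) ^ (β + 1) * k = ω ^ β * (ω * k) := by rw [opow_add, opow_one, mul_assoc]
    have hlim : IsSuccLimit (ω * k) := isSuccLimit_mul_left isSuccLimit_omega0 (pos_iff_ne_zero.2 hk0)
    refine ⟨hx0, fun p hp => ?_⟩
    refine ⟨ω ^ β * (p / ω ^ β + 1), ⟨dvd_mul_right _ _,
      Or.inr (mul_ne_zero hωβ (by rw [Ordinal.add_one_eq_succ]; exact (Ordinal.succ_ne_zero _)))⟩, ?_, ?_⟩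
    · rw [mul_add_one]
      exact Ordinal.lt_mul_div_add p hωβ
    · rw [hx] at hp ⊢
      have hd : p / ω ^ β < ω * k := by
        by_contra hge
        have h1 : ω ^ β * (ω * k) ≤ ω ^ β * (p / ω ^ β) :=
          (mul_le_mul_iff_of_pos_left hωβpos).mpr (not_lt.1 hge)
        exact absurd (h1.trans (Ordinal.mul_div_le p (ω ^ β))) (not_le.2 hp)
      exact (mul_lt_mul_iff_of_pos_left hωβpos).mpr
        (by rw [Ordinal.add_one_eq_succ]; exact hlim.succ_lt hd)

lemma isOpen_Iic_ordinal (γ : Ordinal) : IsOpen (Set.Iic γ : Set Ordinal) := by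
  rw [← Order.Iio_succ]; exact isOpen_Iio

lemma CB_Iic_eq {γ : Ordinal} (α : Ordinal) :
    CB ↥(Set.Iic γ) α = {x : ↥(Set.Iic γ) | ω ^ α ∣ x.1 ∧ (α = 0 ∨ x.1 ≠ 0)} := by
  induction α using Ordinal.induction with
  | h α IH =>
    ext x
    rw [mem_CB]
    have hds : ∀ β < α, (x ∈ derivedSet (CB ↥(Set.Iic γ) β) ↔ (x.1 ≠ 0 ∧ ω ^ (β + 1) ∣ x.1)) := by
      intro β hβ
      rw [IH β hβ, mem_derivedSet_subtype (isOpen_Iic_ordinal γ)]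
      have himg : Subtype.val '' {x : ↥(Set.Iic γ) | ω ^ β ∣ x.1 ∧ (β = 0 ∨ x.1 ≠ 0)}
          = {y : Ordinal | ω ^ β ∣ y ∧ (β = 0 ∨ y ≠ 0)} ∩ Set.Iic γ := by
        ext y
        constructor
        · rintro ⟨z, hz, rfl⟩; exact ⟨hz, z.2⟩
        · rintro ⟨hy, hyγ⟩; exact ⟨⟨y, hyγ⟩, hy, rfl⟩
      rw [himg, show (AccPt (x : Ordinal) (𝓟 ({y : Ordinal | ω ^ β ∣ y ∧ (β = 0 ∨ y ≠ 0)}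
        ∩ Set.Iic γ))) ↔ _ from accPt_inter_isOpen (isOpen_Iic_ordinal γ) x.2, accPt_multiples]
    constructor
    · intro hx
      rcases eq_or_ne α 0 with rfl | hα0
      · exact ⟨by rw [opow_zero]; exact one_dvd _, Or.inl rfl⟩
      · have hα0' : 0 < α := pos_iff_ne_zero.2 hα0
        have hx0 : x.1 ≠ 0 := ((hds 0 hα0').mp (hx 0 hα0')).1
        refine ⟨?_, Or.inr hx0⟩
        rcases Ordinal.zero_or_succ_or_isSuccLimit α with rfl | ⟨δ, rfl⟩ | hlim
        · exact absurd rfl hα0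
        · have h1 := (hds δ (lt_succ δ)).mp (hx δ (lt_succ δ))
          rw [← Ordinal.add_one_eq_succ]
          exact h1.2
        · by_contra hnd
          have hωα : (ω : Ordinal) ^ α ≠ 0 := opow_ne_zero _ omega0_ne_zero
          have hr0 : x.1 % ω ^ α ≠ 0 := fun e => hnd (Ordinal.dvd_of_mod_eq_zero e)
          have hrlt : x.1 % ω ^ α < ω ^ α := Ordinal.mod_lt _ hωα
          obtain ⟨β, hβα, hrβ⟩ := ((Ordinal.lt_opow_of_isSuccLimit omega0_ne_zero hlim).mp hrlt)
          have hβx : ω ^ β ∣ x.1 := dvd_trans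
            (opow_dvd_opow ω (le_self_add (a := β) (b := 1))) ((hds β hβα).mp (hx β hβα)).2
          have hβq : ω ^ β ∣ ω ^ α * (x.1 / ω ^ α) :=
            Dvd.dvd.mul_right (opow_dvd_opow ω hβα.le) _
          have hβr : ω ^ β ∣ x.1 % ω ^ α := by
            have := Ordinal.div_add_mod x.1 (ω ^ α)
            rw [← this] at hβx
            exact (Ordinal.dvd_add_iff hβq).mp hβx
          exact absurd (Ordinal.le_of_dvd hr0 hβr) (not_le.2 hrβ)
    · rintro ⟨hdvd, hor⟩ β hβ
      have hx0 : x.1 ≠ 0 := by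
        rcases hor with rfl | hx0
        · exact absurd hβ not_lt_zero'
        · exact hx0
      refine (hds β hβ).mpr ⟨hx0, dvd_trans (opow_dvd_opow ω ?_) hdvd⟩
      rw [Ordinal.add_one_eq_succ]
      exact Order.succ_le_of_lt hβ

section Counting

lemma mul_nat_injective {c : Ordinal} (hc : c ≠ 0) :
    Function.Injective (fun k : ℕ => c * (k : Ordinal)) := by
  intro a b hab
  have hcpos : 0 < c := pos_iff_ne_zero.2 hc
  have h1 : (a : Ordinal) ≤ b := (mul_le_mul_iff_of_pos_left hcpos).mp (le_of_eq hab)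
  have h2 : (b : Ordinal) ≤ a := (mul_le_mul_iff_of_pos_left hcpos).mp (le_of_eq hab.symm)
  exact Nat.cast_inj.mp (le_antisymm h1 h2)

lemma repr_lemma {α : Ordinal} {n : ℕ} {x : Ordinal} (hx : x ≤ ω ^ α * n)
    (hdvd : ω ^ α ∣ x) : ∃ k : ℕ, k ≤ n ∧ x = ω ^ α * k := by
  have hpos : (0 : Ordinal) < ω ^ α := pos_iff_ne_zero.2 (opow_ne_zero _ omega0_ne_zero)
  obtain ⟨c, rfl⟩ := hdvd
  have hcn : c ≤ n := (mul_le_mul_iff_of_pos_left hpos).mp hx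
  obtain ⟨k, rfl⟩ := Ordinal.lt_omega0.mp (hcn.trans_lt (nat_lt_omega0 n))
  exact ⟨k, Nat.cast_le.mp hcn, rfl⟩

lemma nat_card_piece {α : Ordinal} {n : ℕ} (c : Set Ordinal) (F : Finset ℕ)
    (hF : ∀ k ∈ F, k ≤ n)
    (hmem : ∀ x : Ordinal, x ≤ ω ^ α * n →
      (((ω ^ α ∣ x ∧ (α = 0 ∨ x ≠ 0)) ∧ x ∈ c) ↔ ∃ k ∈ F, x = ω ^ α * k)) :
    Nat.card ↑{x : ↥(Set.Iic (ω ^ α * (n : Ordinal))) |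
      (ω ^ α ∣ x.1 ∧ (α = 0 ∨ x.1 ≠ 0)) ∧ x.1 ∈ c} = F.card := by
  have hω : (ω : Ordinal) ^ α ≠ 0 := opow_ne_zero _ omega0_ne_zero
  have hpos : (0 : Ordinal) < ω ^ α := pos_iff_ne_zero.2 hω
  have himg : Subtype.val '' {x : ↥(Set.Iic (ω ^ α * (n : Ordinal))) |
      (ω ^ α ∣ x.1 ∧ (α = 0 ∨ x.1 ≠ 0)) ∧ x.1 ∈ c}
      = (fun k : ℕ => ω ^ α * (k : Ordinal)) '' ↑F := by
    ext y
    constructor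
    · rintro ⟨x, hx, rfl⟩
      obtain ⟨k, hk, he⟩ := (hmem x.1 x.2).mp hx
      exact ⟨k, hk, he.symm⟩
    · rintro ⟨k, hk, rfl⟩
      have hy : ω ^ α * (k : Ordinal) ≤ ω ^ α * n :=
        (mul_le_mul_iff_of_pos_left hpos).mpr (Nat.cast_le.mpr (hF k hk))
      exact ⟨⟨_, hy⟩, (hmem _ hy).mpr ⟨k, hk, rfl⟩, rfl⟩
  calc Nat.card ↑{x : ↥(Set.Iic (ω ^ α * (n : Ordinal))) |
        (ω ^ α ∣ x.1 ∧ (α = 0 ∨ x.1 ≠ 0)) ∧ x.1 ∈ c}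
      = Nat.card ↑(Subtype.val '' {x : ↥(Set.Iic (ω ^ α * (n : Ordinal))) |
        (ω ^ α ∣ x.1 ∧ (α = 0 ∨ x.1 ≠ 0)) ∧ x.1 ∈ c}) :=
        Nat.card_congr (Equiv.Set.image _ _ Subtype.val_injective)
    _ = F.card := by
        rw [himg, Nat.card_coe_set_eq, Set.ncard_image_of_injective _ (mul_nat_injective hω),
          Set.ncard_coe_finset]

lemma finite_piece {α : Ordinal} {n : ℕ} (c : Set Ordinal) (F : Finset ℕ)
    (hmem : ∀ x : Ordinal, x ≤ ω ^ α * n →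
      (((ω ^ α ∣ x ∧ (α = 0 ∨ x ≠ 0)) ∧ x ∈ c) ↔ ∃ k ∈ F, x = ω ^ α * k)) :
    Set.Finite {x : ↥(Set.Iic (ω ^ α * (n : Ordinal))) |
      (ω ^ α ∣ x.1 ∧ (α = 0 ∨ x.1 ≠ 0)) ∧ x.1 ∈ c} := by
  have : Set.Finite ((fun k : ℕ => ω ^ α * (k : Ordinal)) '' ↑F) := (F.finite_toSet).image _
  apply Set.Finite.of_finite_image _ Subtype.val_injective.injOn
  apply Set.Finite.subset this
  rintro y ⟨x, hx, rfl⟩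
  obtain ⟨k, hk, he⟩ := (hmem x.1 x.2).mp hx
  exact ⟨k, hk, he.symm⟩

end Counting

/-- A space is self-similar if for every finite partition into clopen sets, some
piece contains a clopen subset homeomorphic to the whole space. -/
def SelfSimilar (E : Type*) [TopologicalSpace E] : Prop :=
  ∀ (n : ℕ) (P : Fin n → Set E), (∀ i, IsClopen (P i)) →
    Pairwise (Function.onFun Disjoint P) → (⋃ i, P i) = Set.univ →
    ∃ (i : Fin n) (D : Set E), D ⊆ P i ∧ IsClopen D ∧ Nonempty (↥D ≃ₜ E)

theorem not_selfSimilar_of_ordinal_ge_two (E : Type*) [TopologicalSpace E]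
    [Countable E] [CompactSpace E] [T2Space E]
    (α : Ordinal.{0}) (hα : α.card ≤ Cardinal.aleph0) (n : ℕ) (hn : 2 ≤ n)
    (h : Nonempty (E ≃ₜ ↥(Set.Iic (Ordinal.omega0 ^ α * n)))) :
    ¬ SelfSimilar E := by
  intro hss
  obtain ⟨e⟩ := h
  have hω : (ω : Ordinal) ^ α ≠ 0 := opow_ne_zero _ omega0_ne_zero
  have hpos : (0 : Ordinal) < ω ^ α := pos_iff_ne_zero.2 hω
  have hQclopen : IsClopen {x : ↥(Set.Iic (ω ^ α * (n : Ordinal))) | x.1 ≤ ω ^ α} := by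
    have heq : {x : ↥(Set.Iic (ω ^ α * (n : Ordinal))) | x.1 ≤ ω ^ α}
        = Subtype.val ⁻¹' Set.Iic (ω ^ α) := rfl
    rw [heq]
    exact ⟨isClosed_Iic.preimage continuous_subtype_val,
      (isOpen_Iic_ordinal _).preimage continuous_subtype_val⟩
  set Q : Fin 2 → Set ↥(Set.Iic (ω ^ α * (n : Ordinal))) :=
    ![{x | x.1 ≤ ω ^ α}, {x | x.1 ≤ ω ^ α}ᶜ] with hQ
  set P : Fin 2 → Set E := fun i => e ⁻¹' Q i with hPdef
  have hPclopen : ∀ i, IsClopen (P i) := by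
    intro i
    fin_cases i
    · exact hQclopen.preimage e.continuous
    · exact hQclopen.compl.preimage e.continuous
  have hd01 : Disjoint (P 0) (P 1) := by
    apply Disjoint.preimage
    simp only [hQ, Matrix.cons_val_zero, Matrix.cons_val_one, Matrix.head_cons]
    exact disjoint_compl_right
  have hPdisj : Pairwise (Function.onFun Disjoint P) := by
    intro i j hij
    fin_cases i <;> fin_cases j <;>
      first
        | exact absurd rfl hij
        | exact hd01
        | exact hd01.symm
  have hPunion : ⋃ i, P i = Set.univ := by
    ext x
    simp only [Set.mem_iUnion, Set.mem_univ, iff_true]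
    by_cases h0 : (e x).1 ≤ ω ^ α
    · exact ⟨0, h0⟩
    · exact ⟨1, h0⟩
  obtain ⟨i, D, hDP, hDclopen, ⟨f⟩⟩ := hss 2 P hPclopen hPdisj hPunion
  have hCBE : CB E α = e ⁻¹' CB ↥(Set.Iic (ω ^ α * (n : Ordinal))) α := by
    rw [← CB_image_homeomorph e α, Set.preimage_image_eq _ e.injective]
  have hCBD : CB ↥D α = Subtype.val ⁻¹' CB E α := CB_subtype hDclopen.isOpen α
  set T := CB ↥(Set.Iic (ω ^ α * (n : Ordinal))) α with hT
  have key : ∀ x : ↥(Set.Iic (ω ^ α * (n : Ordinal))), x ∈ T →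
      e ((f.symm (e.symm x)).1) ∈ T ∧ e ((f.symm (e.symm x)).1) ∈ Q i := by
    intro x hx
    have ha : e.symm x ∈ CB E α := by
      rw [hCBE, Set.mem_preimage, Homeomorph.apply_symm_apply]
      exact hx
    have hb : f.symm (e.symm x) ∈ CB ↥D α := by
      rw [← CB_image_homeomorph f.symm α]
      exact Set.mem_image_of_mem _ ha
    rw [hCBD] at hb
    have hc1 : (f.symm (e.symm x)).1 ∈ CB E α := hb
    have hc2 : (f.symm (e.symm x)).1 ∈ P i := hDP (f.symm (e.symm x)).2
    rw [hCBE] at hc1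
    exact ⟨hc1, hc2⟩
  have hinj : ∃ Φ : ↑T → ↑(T ∩ Q i), Function.Injective Φ := by
    refine ⟨fun x => ⟨e ((f.symm (e.symm x.1)).1), (key x.1 x.2).1, (key x.1 x.2).2⟩, ?_⟩
    intro x y hxy
    simp only [Subtype.mk.injEq] at hxy
    exact Subtype.ext (e.symm.injective (f.symm.injective (Subtype.val_injective
      (e.injective (congrArg Subtype.val hxy)))))
  obtain ⟨Φ, hΦ⟩ := hinj
  have hTeq : T = {x : ↥(Set.Iic (ω ^ α * (n : Ordinal))) |
      ω ^ α ∣ x.1 ∧ (α = 0 ∨ x.1 ≠ 0)} := CB_Iic_eq α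
  have hTu : T = {x : ↥(Set.Iic (ω ^ α * (n : Ordinal))) |
      (ω ^ α ∣ x.1 ∧ (α = 0 ∨ x.1 ≠ 0)) ∧ x.1 ∈ (Set.univ : Set Ordinal)} := by
    rw [hTeq]; ext x; simp
  have hT0 : T ∩ Q 0 = {x : ↥(Set.Iic (ω ^ α * (n : Ordinal))) |
      (ω ^ α ∣ x.1 ∧ (α = 0 ∨ x.1 ≠ 0)) ∧ x.1 ∈ Set.Iic (ω ^ α)} := by
    rw [hTeq]; ext x; simp [hQ, and_assoc]
  have hT1 : T ∩ Q 1 = {x : ↥(Set.Iic (ω ^ α * (n : Ordinal))) |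
      (ω ^ α ∣ x.1 ∧ (α = 0 ∨ x.1 ≠ 0)) ∧ x.1 ∈ {y : Ordinal | ω ^ α < y}} := by
    rw [hTeq]; ext x; simp [hQ, not_le, and_assoc]
  -- the "high" piece, uniform in α
  have hmemH : ∀ x : Ordinal, x ≤ ω ^ α * n →
      (((ω ^ α ∣ x ∧ (α = 0 ∨ x ≠ 0)) ∧ x ∈ {y : Ordinal | ω ^ α < y}) ↔
        ∃ k ∈ Finset.Icc 2 n, x = ω ^ α * k) := by
    intro x hx
    constructor
    · rintro ⟨⟨hdvd, -⟩, hhigh⟩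
      obtain ⟨k, hkn, rfl⟩ := repr_lemma hx hdvd
      have h1k : (1 : Ordinal) < k := by
        rw [← mul_lt_mul_iff_of_pos_left hpos, mul_one]
        exact hhigh
      have h2k : 2 ≤ k := by exact_mod_cast Order.add_one_le_of_lt h1k
      exact ⟨k, Finset.mem_Icc.2 ⟨by exact_mod_cast h2k, hkn⟩, rfl⟩
    · rintro ⟨k, hk, rfl⟩
      obtain ⟨h2k, -⟩ := Finset.mem_Icc.1 hk
      refine ⟨⟨dvd_mul_right _ _, Or.inr (mul_ne_zero hω ?_)⟩, ?_⟩
      · exact fun hc => (by omega : k ≠ 0) (Nat.cast_eq_zero.1 hc)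
      · show ω ^ α < ω ^ α * k
        have h1k : (1 : Ordinal) < (k : Ordinal) := by exact_mod_cast (by omega : 1 < k)
        calc ω ^ α = ω ^ α * 1 := (mul_one _).symm
          _ < ω ^ α * k := (mul_lt_mul_iff_of_pos_left hpos).2 h1k
  have hcardH : Nat.card ↑(T ∩ Q 1) = n - 1 := by
    rw [hT1, nat_card_piece _ _ (fun k hk => (Finset.mem_Icc.1 hk).2) hmemH, Nat.card_Icc]
    omega
  have hfinH : Finite ↑(T ∩ Q 1) := by
    rw [hT1]; exact (finite_piece _ _ hmemH).to_subtype
  rcases eq_or_ne α 0 with rfl | hα0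
  · -- α = 0
    have hmemU : ∀ x : Ordinal, x ≤ ω ^ (0:Ordinal) * n →
        (((ω ^ (0:Ordinal) ∣ x ∧ ((0:Ordinal) = 0 ∨ x ≠ 0)) ∧ x ∈ (Set.univ : Set Ordinal)) ↔
          ∃ k ∈ Finset.range (n + 1), x = ω ^ (0:Ordinal) * k) := by
      intro x hx
      constructor
      · rintro ⟨⟨hdvd, -⟩, -⟩
        obtain ⟨k, hkn, rfl⟩ := repr_lemma hx hdvd
        exact ⟨k, Finset.mem_range.2 (Nat.lt_succ_of_le hkn), rfl⟩
      · rintro ⟨k, -, rfl⟩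
        exact ⟨⟨dvd_mul_right _ _, Or.inl rfl⟩, Set.mem_univ _⟩
    have hmemL : ∀ x : Ordinal, x ≤ ω ^ (0:Ordinal) * n →
        (((ω ^ (0:Ordinal) ∣ x ∧ ((0:Ordinal) = 0 ∨ x ≠ 0)) ∧ x ∈ Set.Iic (ω ^ (0:Ordinal))) ↔
          ∃ k ∈ Finset.range 2, x = ω ^ (0:Ordinal) * k) := by
      intro x hx
      constructor
      · rintro ⟨⟨hdvd, -⟩, hlow⟩
        obtain ⟨k, hkn, rfl⟩ := repr_lemma hx hdvd
        have hk1 : (k : Ordinal) ≤ 1 := by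
          rw [← mul_le_mul_iff_of_pos_left hpos, mul_one]
          exact hlow
        have : k ≤ 1 := by exact_mod_cast hk1
        exact ⟨k, Finset.mem_range.2 (by omega), rfl⟩
      · rintro ⟨k, hk, rfl⟩
        have hk1 : k ≤ 1 := by have := Finset.mem_range.1 hk; omega
        refine ⟨⟨dvd_mul_right _ _, Or.inl rfl⟩, ?_⟩
        show ω ^ (0:Ordinal) * k ≤ ω ^ (0:Ordinal)
        have hk1' : (k : Ordinal) ≤ 1 := by exact_mod_cast hk1
        calc ω ^ (0:Ordinal) * k ≤ ω ^ (0:Ordinal) * 1 :=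
              (mul_le_mul_iff_of_pos_left hpos).2 hk1'
          _ = ω ^ (0:Ordinal) := mul_one _
    have hcardT : Nat.card ↑T = n + 1 := by
      rw [hTu, nat_card_piece _ _ (fun k hk => by
        have := Finset.mem_range.1 hk; omega) hmemU, Finset.card_range]
    have hi : i = 0 ∨ i = 1 := by fin_cases i; exacts [Or.inl rfl, Or.inr rfl]
    rcases hi with rfl | rfl
    · have hcardL : Nat.card ↑(T ∩ Q 0) = 2 := by
        rw [hT0, nat_card_piece _ _ (fun k hk => by
          have := Finset.mem_range.1 hk; omega) hmemL, Finset.card_range]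
      have hfinL : Finite ↑(T ∩ Q 0) := by
        rw [hT0]; exact (finite_piece _ _ hmemL).to_subtype
      have hle := Nat.card_le_card_of_injective Φ hΦ
      omega
    · have hle := Nat.card_le_card_of_injective Φ hΦ
      omega
  · -- α ≠ 0
    have hmemU : ∀ x : Ordinal, x ≤ ω ^ α * n →
        (((ω ^ α ∣ x ∧ (α = 0 ∨ x ≠ 0)) ∧ x ∈ (Set.univ : Set Ordinal)) ↔
          ∃ k ∈ Finset.Icc 1 n, x = ω ^ α * k) := by
      intro x hx
      constructor
      · rintro ⟨⟨hdvd, hor⟩, -⟩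
        have hx0 : x ≠ 0 := hor.resolve_left hα0
        obtain ⟨k, hkn, rfl⟩ := repr_lemma hx hdvd
        have hk0 : k ≠ 0 := by
          rintro rfl
          simp at hx0
        exact ⟨k, Finset.mem_Icc.2 ⟨by omega, hkn⟩, rfl⟩
      · rintro ⟨k, hk, rfl⟩
        obtain ⟨h1k, -⟩ := Finset.mem_Icc.1 hk
        exact ⟨⟨dvd_mul_right _ _, Or.inr (mul_ne_zero hω
          (fun hc => (by omega : k ≠ 0) (Nat.cast_eq_zero.1 hc)))⟩, Set.mem_univ _⟩
    have hmemL : ∀ x : Ordinal, x ≤ ω ^ α * n →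
        (((ω ^ α ∣ x ∧ (α = 0 ∨ x ≠ 0)) ∧ x ∈ Set.Iic (ω ^ α)) ↔
          ∃ k ∈ ({1} : Finset ℕ), x = ω ^ α * k) := by
      intro x hx
      constructor
      · rintro ⟨⟨hdvd, hor⟩, hlow⟩
        have hx0 : x ≠ 0 := hor.resolve_left hα0
        obtain ⟨k, hkn, rfl⟩ := repr_lemma hx hdvd
        have hk0 : k ≠ 0 := by
          rintro rfl
          simp at hx0
        have hk1 : (k : Ordinal) ≤ 1 := by
          rw [← mul_le_mul_iff_of_pos_left hpos, mul_one]
          exact hlow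
        have : k ≤ 1 := by exact_mod_cast hk1
        have : k = 1 := by omega
        exact ⟨k, by simp [this], rfl⟩
      · rintro ⟨k, hk, rfl⟩
        have hk1 : k = 1 := Finset.mem_singleton.1 hk
        subst hk1
        refine ⟨⟨dvd_mul_right _ _, Or.inr (mul_ne_zero hω (by
          rw [Nat.cast_one]; exact one_ne_zero))⟩, ?_⟩
        show ω ^ α * ((1:ℕ) : Ordinal) ≤ ω ^ α
        rw [Nat.cast_one, mul_one]
    have hcardT : Nat.card ↑T = n := by
      rw [hTu, nat_card_piece _ _ (fun k hk => (Finset.mem_Icc.1 hk).2) hmemU, Nat.card_Icc]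
      omega
    have hi : i = 0 ∨ i = 1 := by fin_cases i; exacts [Or.inl rfl, Or.inr rfl]
    rcases hi with rfl | rfl
    · have hcardL : Nat.card ↑(T ∩ Q 0) = 1 := by
        rw [hT0, nat_card_piece _ _ (fun k hk => by
          have := Finset.mem_singleton.1 hk; omega) hmemL, Finset.card_singleton]
      have hfinL : Finite ↑(T ∩ Q 0) := by
        rw [hT0]; exact (finite_piece _ _ hmemL).to_subtype
      have hle := Nat.card_le_card_of_injective Φ hΦ
      omega
    · have hle := Nat.card_le_card_of_injective Φ hΦ
      omega
end
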